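/- Let V be a real vector space with a quaternionic triple (I,J,K), and let W ⊆ V be a subspace with I(W) ⊆ W such that V is the internal direct sum of W and J(W). Let g₀ be an inner product on W satisfying g₀(Ix, Iy) = g₀(x,y) for all x,y ∈ W. Then there exists a unique inner product g on V such that: g restricts to g₀ on W; g(w, Jw') = 0 for all w, w' ∈ W; and g is hyperhermitian, i.e. g(Lx, Ly) = g(x,y) for all x,y ∈ V and each L ∈ {I,J,K}. -/

import Mathlib

/-!
Identify `V = W ⊕ J(W)` with `W × W` through `(a, b) ↦ a + J b`. In these coordinates
`J (a, b) = (-b, a)` and, since `I` preserves `W` and anticommutes with `J`,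
`I (a, b) = (I a, -I b)`. Expanding `g (a + J b) (a' + J b')` with `g(W, J W) = 0` and
`J`-invariance forces `g = g₀ ⊕ g₀` in these coordinates; conversely `g₀ ⊕ g₀` is visibly
invariant under both actions, hence under `K = I J`.
-/

namespace LinearMap

variable {R M₁ M₂ : Type*} [CommRing R] [AddCommGroup M₁] [Module R M₁] [AddCommGroup M₂]
  [Module R M₂] (B₁ : M₁ →ₗ[R] M₁ →ₗ[R] R) (B₂ : M₂ →ₗ[R] M₂ →ₗ[R] R)

def bilinProd : (M₁ × M₂) →ₗ[R] (M₁ × M₂) →ₗ[R] R :=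
  B₁.compl₁₂ (fst R M₁ M₂) (fst R M₁ M₂) + B₂.compl₁₂ (snd R M₁ M₂) (snd R M₁ M₂)

@[simp]
theorem bilinProd_apply (u v : M₁ × M₂) : bilinProd B₁ B₂ u v = B₁ u.1 v.1 + B₂ u.2 v.2 := rfl

variable {B₁ B₂}

theorem bilinProd_comm (h₁ : ∀ x y, B₁ x y = B₁ y x) (h₂ : ∀ x y, B₂ x y = B₂ y x)
    (u v : M₁ × M₂) : bilinProd B₁ B₂ u v = bilinProd B₁ B₂ v u := by
  simp only [bilinProd_apply, h₁ u.1, h₂ u.2]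

theorem bilinProd_self_pos [PartialOrder R] [IsOrderedRing R]
    (h₁ : ∀ x, x ≠ 0 → 0 < B₁ x x) (h₂ : ∀ x, x ≠ 0 → 0 < B₂ x x) {u : M₁ × M₂} (hu : u ≠ 0) :
    0 < bilinProd B₁ B₂ u u := by
  obtain ⟨a, b⟩ := u
  have hb_nonneg : 0 ≤ B₂ b b := by
    rcases eq_or_ne b 0 with rfl | hb
    · simp
    · exact (h₂ b hb).le
  rcases eq_or_ne a 0 with rfl | ha
  · have hb : b ≠ 0 := by rintro rfl; exact hu rfl
    simpa using h₂ b hb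
  · exact add_pos_of_pos_of_nonneg (h₁ a ha) hb_nonneg

end LinearMap

namespace Submodule

section

variable {R V : Type*} [Ring R] [AddCommGroup V] [Module R V] {J : V →ₗ[R] V}
  {W : Submodule R V} (hJ : Function.Injective J) (hW : IsCompl W (W.map J))

noncomputable def prodEquivOfIsComplMap : (W × W) ≃ₗ[R] V :=
  ((LinearEquiv.refl R W).prodCongr (W.equivMapOfInjective J hJ)).trans
    (prodEquivOfIsCompl _ _ hW)

@[simp]
theorem prodEquivOfIsComplMap_apply (a b : W) :
    prodEquivOfIsComplMap hJ hW (a, b) = (a : V) + J b := rfl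

theorem map_prodEquivOfIsComplMap_of_sq_eq_neg_one (hJJ : ∀ v, J (J v) = -v) (a b : W) :
    J (prodEquivOfIsComplMap hJ hW (a, b)) = prodEquivOfIsComplMap hJ hW (-b, a) := by
  simp [hJJ, add_comm]

theorem map_prodEquivOfIsComplMap_of_anticomm {I : V →ₗ[R] V} (hIW : ∀ x ∈ W, I x ∈ W)
    (hIJ : ∀ v, I (J v) = -J (I v)) (a b : W) :
    I (prodEquivOfIsComplMap hJ hW (a, b)) =
      prodEquivOfIsComplMap hJ hW (I.restrict hIW a, -I.restrict hIW b) := by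
  simp [hIJ]

end

section

variable {R V : Type*} [CommRing R] [AddCommGroup V] [Module R V] {J : V →ₗ[R] V}
  {W : Submodule R V} (hJ : Function.Injective J) (hW : IsCompl W (W.map J))

theorem eq_bilinProd_compl₁₂_prodEquivOfIsComplMap_symm {g : V →ₗ[R] V →ₗ[R] R}
    {g₀ : W →ₗ[R] W →ₗ[R] R} (hsymm : ∀ x y, g x y = g y x) (hgW : ∀ x y : W, g x y = g₀ x y)
    (hgWJ : ∀ x y : W, g x (J y) = 0) (hgJ : ∀ x y, g (J x) (J y) = g x y) :
    g = (g₀.bilinProd g₀).compl₁₂ (prodEquivOfIsComplMap hJ hW).symm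
      (prodEquivOfIsComplMap hJ hW).symm := by
  refine LinearMap.ext₂ fun x y => ?_
  obtain ⟨⟨a, b⟩, rfl⟩ := (prodEquivOfIsComplMap hJ hW).surjective x
  obtain ⟨⟨a', b'⟩, rfl⟩ := (prodEquivOfIsComplMap hJ hW).surjective y
  simp only [LinearMap.compl₁₂_apply, LinearEquiv.coe_coe, LinearEquiv.symm_apply_apply]
  simp [hgW, hgWJ, hgJ, hsymm (J b) a']

end

end Submodule

theorem unique_hyperhermitian_extension_general
    (V : Type*) [AddCommGroup V] [Module ℝ V]
    (I J K : V →ₗ[ℝ] V)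
    (hJ : J ∘ₗ J = -LinearMap.id)
    (hIJ : I ∘ₗ J = K) (hJI : J ∘ₗ I = -K)
    (W : Submodule ℝ V) (hIW : ∀ x ∈ W, I x ∈ W)
    (hcompl : IsCompl W (Submodule.map J W))
    (g₀ : W →ₗ[ℝ] W →ₗ[ℝ] ℝ)
    (hg₀symm : ∀ x y : W, g₀ x y = g₀ y x)
    (hg₀pos : ∀ x : W, x ≠ 0 → 0 < g₀ x x)
    (hg₀I : ∀ x y : W, g₀ (I.restrict hIW x) (I.restrict hIW y) = g₀ x y) :
    ∃! g : V →ₗ[ℝ] V →ₗ[ℝ] ℝ,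
      (∀ x y : V, g x y = g y x) ∧
      (∀ x : V, x ≠ 0 → 0 < g x x) ∧
      (∀ x y : W, g x y = g₀ x y) ∧
      (∀ x y : W, g x (J y) = 0) ∧
      (∀ x y : V, g (I x) (I y) = g x y) ∧
      (∀ x y : V, g (J x) (J y) = g x y) ∧
      (∀ x y : V, g (K x) (K y) = g x y) := by
  have hJJ : ∀ v, J (J v) = -v := fun v => by simpa using LinearMap.congr_fun hJ v
  have hK : ∀ v, I (J v) = K v := LinearMap.congr_fun hIJ
  have hIJ_anticomm : ∀ v, I (J v) = -J (I v) := fun v => by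
    simpa [hK, neg_eq_iff_eq_neg] using (LinearMap.congr_fun hJI v).symm
  have hJinj : Function.Injective J := fun a b hab => by simpa [hJJ] using congrArg J hab
  set Φ := W.prodEquivOfIsComplMap hJinj hcompl
  set g := (g₀.bilinProd g₀).compl₁₂ Φ.symm.toLinearMap Φ.symm.toLinearMap
  have hgΦ : ∀ u v, g (Φ u) (Φ v) = g₀.bilinProd g₀ u v := by simp [g]
  have hJΦ : ∀ a b, J (Φ (a, b)) = Φ (-b, a) :=
    W.map_prodEquivOfIsComplMap_of_sq_eq_neg_one hJinj hcompl hJJ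
  have hIΦ : ∀ a b, I (Φ (a, b)) = Φ (I.restrict hIW a, -I.restrict hIW b) :=
    W.map_prodEquivOfIsComplMap_of_anticomm hJinj hcompl hIW hIJ_anticomm
  have hgI : ∀ x y, g (I x) (I y) = g x y :=
    Φ.surjective.forall₂.2 fun ⟨a, b⟩ ⟨a', b'⟩ => by rw [hIΦ, hIΦ, hgΦ, hgΦ]; simp [hg₀I]
  have hgJ : ∀ x y, g (J x) (J y) = g x y :=
    Φ.surjective.forall₂.2 fun ⟨a, b⟩ ⟨a', b'⟩ => by rw [hJΦ, hJΦ, hgΦ, hgΦ]; simp [add_comm]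
  refine ⟨g, ⟨?_, ?_, ?_, ?_, hgI, hgJ, ?_⟩,
    fun g' ⟨hsymm, _, hgW, hgWJ, _, hgJ', _⟩ =>
      W.eq_bilinProd_compl₁₂_prodEquivOfIsComplMap_symm hJinj hcompl hsymm hgW hgWJ hgJ'⟩
  · exact Φ.surjective.forall₂.2 fun u v => by
      simp only [hgΦ, LinearMap.bilinProd_comm hg₀symm hg₀symm u]
  · exact Φ.surjective.forall.2 fun u hu => by
      simpa [hgΦ] using LinearMap.bilinProd_self_pos hg₀pos hg₀pos (Φ.map_ne_zero_iff.1 hu)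
  · exact fun x y => by simpa [Φ] using hgΦ (x, 0) (y, 0)
  · exact fun x y => by simpa [Φ] using hgΦ (x, 0) (0, y)
  · exact fun x y => by rw [← hK, ← hK, hgI, hgJ]

/-- Let `(I,J,K)` be a quaternionic triple on `V` and `W ⊆ V` an `I`-invariant
subspace with `V = W ⊕ J(W)`. Any `I`-invariant inner product `g₀` on `W` extends uniquely to
a hyperhermitian inner product `g` on `V` with `g(W, J(W)) = 0`. -/
theorem unique_hyperhermitian_extension
    (V : Type*) [AddCommGroup V] [Module ℝ V]
    (I J K : V →ₗ[ℝ] V)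
    (hI : I ∘ₗ I = -LinearMap.id) (hJ : J ∘ₗ J = -LinearMap.id)
    (hK : K ∘ₗ K = -LinearMap.id) (hIJ : I ∘ₗ J = K) (hJI : J ∘ₗ I = -K)
    (W : Submodule ℝ V) (hIW : ∀ x ∈ W, I x ∈ W)
    (hcompl : IsCompl W (Submodule.map J W))
    (g₀ : W →ₗ[ℝ] W →ₗ[ℝ] ℝ)
    (hg₀symm : ∀ x y : W, g₀ x y = g₀ y x)
    (hg₀pos : ∀ x : W, x ≠ 0 → 0 < g₀ x x)
    (hg₀I : ∀ x y : W, g₀ (I.restrict hIW x) (I.restrict hIW y) = g₀ x y) :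
    ∃! g : V →ₗ[ℝ] V →ₗ[ℝ] ℝ,
      (∀ x y : V, g x y = g y x) ∧
      (∀ x : V, x ≠ 0 → 0 < g x x) ∧
      (∀ x y : W, g x y = g₀ x y) ∧
      (∀ x y : W, g x (J y) = 0) ∧
      (∀ x y : V, g (I x) (I y) = g x y) ∧
      (∀ x y : V, g (J x) (J y) = g x y) ∧
      (∀ x y : V, g (K x) (K y) = g x y) :=
  unique_hyperhermitian_extension_general V I J K hJ hIJ hJI W hIW hcompl g₀ hg₀symm hg₀pos hg₀I
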